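/- Let k, r, a, b, m, n be integers with k ≥ 1, 0 ≤ a ≤ m, n ≥ km − r, and max{0, ka − r} ≤ b ≤ n. Then the number of monotone lattice paths from (a,b) to (m,n) staying weakly above the line y = kx − r equals the alternating sum over i from 0 to ⌊(b+r−ka)/(k+1)⌋ of (−1)^i · ((n+r+1−km)/(n+r+1−k(a+i))) · C(m+n+r−(k+1)(a+i), m−a−i) · C(b+r−k(a+i), i). -/

import Mathlib

open Finset

/-- A monotone lattice path from `s` to `t` using unit steps `(1,0)` and `(0,1)`. -/
def MonoPath (s t : ℤ × ℤ) (P : List (ℤ × ℤ)) : Prop :=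
  P.head? = some s ∧ P.getLast? = some t ∧
  P.Chain' (fun p q => q = (p.1 + 1, p.2) ∨ q = (p.1, p.2 + 1))

/-- Integer binomial coefficient, `0` for negative lower index. -/
def IC (x j : ℤ) : ℕ := if j < 0 then 0 else x.toNat.choose j.toNat

/-- Number of monotone lattice paths from `(a,b)` to `(m,n)` staying weakly above `y = kx - r`. -/
noncomputable def NW (k r a b m n : ℤ) : ℕ :=
  Set.ncard {P : List (ℤ × ℤ) | MonoPath (a, b) (m, n) P ∧ ∀ p ∈ P, k * p.1 - r ≤ p.2}

/-- Number of monotone lattice paths from `(a,b)` to `(m,n)` staying strictly above `y = kx - r`. -/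
noncomputable def NS (k r a b m n : ℤ) : ℕ :=
  Set.ncard {P : List (ℤ × ℤ) | MonoPath (a, b) (m, n) P ∧ ∀ p ∈ P, k * p.1 - r < p.2}


/-!
A path from `(a, b)` starts with a step right or up, so the number of paths satisfies
`NW(a, b) = NW(a + 1, b) + NW(a, b + 1)` above the line, with `NW(m, n) = 1`; we check that the
formula obeys the same recursion and boundary values. Its summand is
`(-1)^i · ballot(d - k i, M - i) · C(e - k i, i)` with a generalized ballot number, and Pascal's
rule in `e` gives the recursion. When `(a + 1, b)` lies below the line only the term `i = 0`
survives, which does not depend on `b`. The remaining boundary value, vanishing at `b = n + 1`,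
comes from Pascal's rule in `d` and `e` together: along the diagonal `d = e` the sum does not
change when `d - k M` grows, and on the line `d = k M` every term vanishes.
-/

lemma IC_of_neg {x j : ℤ} (h : j < 0) : IC x j = 0 := by simp [IC, h]

lemma IC_zero_right (x : ℤ) : IC x 0 = 1 := by simp [IC]

lemma IC_eq_zero_of_lt {x j : ℤ} (h : x < j) (hj : 1 ≤ j) : IC x j = 0 := by
  rw [IC, if_neg (by omega)]
  exact Nat.choose_eq_zero_of_lt (by omega)

/-- Pascal's rule; it fails only for `j = 1`, `x < 0`, where `IC (x + 1) 1 = 0` but `IC x 0 = 1`. -/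
lemma IC_succ {x j : ℤ} (h : 0 ≤ x ∨ j ≠ 1) : IC (x + 1) j = IC x j + IC x (j - 1) := by
  rcases lt_or_ge j 0 with hj | hj
  · rw [IC_of_neg hj, IC_of_neg hj, IC_of_neg (by omega)]
  rcases hj.eq_or_lt with rfl | hj
  · rw [IC_zero_right, IC_zero_right, IC_of_neg (by omega)]
  rcases lt_or_ge x 0 with hx | hx
  · rw [IC_eq_zero_of_lt (by omega) (by omega), IC_eq_zero_of_lt (by omega) (by omega),
      IC_eq_zero_of_lt (by omega) (by omega)]
  obtain ⟨x, rfl⟩ : ∃ x' : ℕ, x = x' := ⟨x.toNat, by omega⟩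
  obtain ⟨j, rfl⟩ : ∃ j' : ℕ, j = j' + 1 := ⟨(j - 1).toNat, by omega⟩
  rw [add_sub_cancel_right]
  exact_mod_cast (Nat.choose_succ_succ' x j).trans (add_comm _ _)

lemma IC_mul_eq {d M : ℤ} (hM : 1 ≤ M) (hd : 1 ≤ d) :
    M * IC (d + M - 1) M = d * IC (d + M - 1) (M - 1) := by
  obtain ⟨M, rfl⟩ : ∃ M' : ℕ, M = M' + 1 := ⟨(M - 1).toNat, by omega⟩
  obtain ⟨d, rfl⟩ : ∃ d' : ℕ, d = d' + 1 := ⟨(d - 1).toNat, by omega⟩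
  have key := Nat.choose_succ_right_eq (d + M + 1) M
  rw [show d + M + 1 - M = d + 1 by omega] at key
  rw [show (d : ℤ) + 1 + (M + 1) - 1 = ((d + M + 1 : ℕ) : ℤ) by push_cast; ring,
    add_sub_cancel_right]
  exact_mod_cast (by linarith [key] :
    (M + 1) * (d + M + 1).choose (M + 1) = (d + 1) * (d + M + 1).choose M)

/-- The generalized ballot number `(d - k M) / d * C(d + M - 1, M)` (for `1 ≤ d`, see
`mul_ballot`) written without division; for `k M ≤ d` it counts the paths from `(0, 0)` to
`(M, d - 1)` weakly above `y = k x`. -/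
def ballot (k d M : ℤ) : ℤ := IC (d + M - 1) M - k * IC (d + M - 1) (M - 1)

lemma ballot_zero_right (k d : ℤ) : ballot k d 0 = 1 := by
  simp [ballot, IC_zero_right, IC_of_neg]

lemma ballot_of_neg {k d M : ℤ} (hM : M < 0) : ballot k d M = 0 := by
  simp [ballot, IC_of_neg hM, IC_of_neg (by omega : M - 1 < 0)]

lemma ballot_succ {k d M : ℤ} (h : 0 ≤ d + M ∨ M < 0) :
    ballot k (d + 1) (M + 1) = ballot k d (M + 1) + ballot k (d + 1) M := by
  have h₁ : IC (d + M + 1) (M + 1) = IC (d + M) (M + 1) + IC (d + M) M := by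
    simpa using IC_succ (x := d + M) (j := M + 1) (by omega)
  have h₂ : IC (d + M + 1) M = IC (d + M) M + IC (d + M) (M - 1) := IC_succ (by omega)
  simp only [ballot, show d + 1 + (M + 1) - 1 = d + M + 1 by ring,
    show d + (M + 1) - 1 = d + M by ring, show d + 1 + M - 1 = d + M by ring, add_sub_cancel_right,
    h₁, h₂]
  push_cast
  ring

lemma mul_ballot {k d : ℤ} (M : ℤ) (hd : 1 ≤ d) :
    d * ballot k d M = (d - k * M) * IC (d + M - 1) M := by
  rcases lt_trichotomy M 0 with hM | rfl | hM
  · rw [ballot_of_neg hM, IC_of_neg hM]; ring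
  · simp [ballot_zero_right, IC_zero_right]
  · have := IC_mul_eq hM hd
    rw [ballot]
    linear_combination k * this

lemma ballot_mul_self_eq_zero {k M : ℤ} (hk : 1 ≤ k) (hM : 1 ≤ M) : ballot k (k * M) M = 0 := by
  have hkM : 1 ≤ k * M := by nlinarith
  have := mul_ballot (k := k) M hkM
  rw [sub_self, zero_mul] at this
  exact (mul_eq_zero.1 this).resolve_left (by omega)

lemma cast_ballot_eq_div {k d : ℤ} (M : ℤ) (hd : 1 ≤ d) :
    (ballot k d M : ℚ) = ((d - k * M : ℤ) : ℚ) / d * IC (d + M - 1) M := by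
  have hd' : (d : ℚ) ≠ 0 := by exact_mod_cast (by omega : d ≠ 0)
  rw [div_mul_eq_mul_div, eq_div_iff hd', mul_comm]
  exact_mod_cast mul_ballot M hd

def pathSum (k : ℤ) (M : ℕ) (d e : ℤ) : ℤ :=
  ∑ i ∈ range (M + 1), (-1) ^ i * ballot k (d - k * i) (M - i) * IC (e - k * i) i

lemma pathSum_zero (k d e : ℤ) : pathSum k 0 d e = 1 := by
  simp [pathSum, ballot_zero_right, IC_zero_right]

lemma pathSum_of_lt {k e : ℤ} (hk : 0 ≤ k) (M : ℕ) (d : ℤ) (he : e < k + 1) :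
    pathSum k M d e = ballot k d M := by
  rw [pathSum, sum_range_succ', sum_eq_zero]
  · simp [IC_zero_right]
  · intro i _
    rw [IC_eq_zero_of_lt (by push_cast; nlinarith) (by push_cast; omega)]
    ring

lemma pathSum_succ_e {k : ℤ} (M : ℕ) (d e : ℤ) (he : k ≤ e) :
    pathSum k (M + 1) d (e + 1) = pathSum k (M + 1) d e - pathSum k M (d - k) (e - k) := by
  have hterm : ∀ j ∈ range (M + 1),
      (-1) ^ (j + 1) * ballot k (d - k * (j + 1 : ℕ)) ((M + 1 : ℕ) - (j + 1 : ℕ)) *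
          (IC (e + 1 - k * (j + 1 : ℕ)) (j + 1 : ℕ) : ℤ) =
        (-1) ^ (j + 1) * ballot k (d - k * (j + 1 : ℕ)) ((M + 1 : ℕ) - (j + 1 : ℕ)) *
          (IC (e - k * (j + 1 : ℕ)) (j + 1 : ℕ) : ℤ) -
        (-1) ^ j * ballot k (d - k - k * j) (M - j) * IC (e - k - k * j) j := by
    intro j _
    have hP := IC_succ (x := e - k - k * j) (j := j + 1) (by
      rcases j with _ | j
      · left; simpa using he
      · right; omega)
    rw [show e - k - k * j + 1 = e + 1 - k * (j + 1) by ring, add_sub_cancel_right] at hP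
    push_cast
    rw [hP, show d - k * (j + 1) = d - k - k * j by ring,
      show (M : ℤ) + 1 - (j + 1) = M - j by ring, show e - k * (j + 1) = e - k - k * j by ring]
    push_cast
    ring
  rw [pathSum, pathSum, pathSum, sum_range_succ', sum_range_succ' _ (M + 1),
    sum_congr rfl hterm, sum_sub_distrib]
  simp only [CharP.cast_eq_zero, mul_zero, sub_zero, IC_zero_right]
  ring

lemma pathSum_succ_d {k : ℤ} (hk : 0 ≤ k) (M : ℕ) (d e : ℤ) (hd : k * (M + 1) + 1 ≤ d) :
    pathSum k (M + 1) d e = pathSum k (M + 1) (d - 1) e + pathSum k M d e := by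
  have hterm : ∀ i ∈ range (M + 1 + 1), ballot k (d - k * i) ((M + 1 : ℕ) - i) =
      ballot k (d - 1 - k * i) ((M + 1 : ℕ) - i) + ballot k (d - k * i) (M - i) := by
    intro i hi
    have hi : (i : ℤ) ≤ M + 1 := by have := mem_range.1 hi; omega
    have := ballot_succ (k := k) (d := d - 1 - k * i) (M := M - i) (by
      rcases lt_or_ge (M : ℤ) i with h | h
      · right; omega
      · left; nlinarith)
    convert this using 2 <;> push_cast <;> ring_nf
  have hlast : pathSum k M d e =
      ∑ i ∈ range (M + 1 + 1), (-1) ^ i * ballot k (d - k * i) (M - i) * IC (e - k * i) i := by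
    rw [pathSum, sum_range_succ _ (M + 1), ballot_of_neg (by push_cast; omega)]
    ring
  rw [hlast, pathSum, pathSum, ← sum_add_distrib]
  exact sum_congr rfl fun i hi => by rw [hterm i hi]; ring

lemma pathSum_mul_self_eq_zero {k : ℤ} (hk : 1 ≤ k) {M : ℕ} (hM : 1 ≤ M) {e : ℤ}
    (he : e < (k + 1) * M) : pathSum k M (k * M) e = 0 := by
  refine sum_eq_zero fun i hi => ?_
  rcases (Nat.lt_succ_iff.1 (mem_range.1 hi)).lt_or_eq with hi | rfl
  · rw [show k * M - k * i = k * (M - i) by ring,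
      ballot_mul_self_eq_zero hk (by omega)]
    ring
  · rw [IC_eq_zero_of_lt (by linarith) (by exact_mod_cast hM)]
    ring

lemma pathSum_diag_eq {k : ℤ} (hk : 0 ≤ k) (M : ℕ) {D : ℤ} (hD : 0 ≤ D) :
    pathSum k M (k * M + D) (k * M + D) = pathSum k M (k * M) (k * M) := by
  induction M generalizing D with
  | zero => simp [pathSum_zero]
  | succ M ih =>
    induction D, hD using Int.leInduction with
    | base => simp
    | succ D hD ihD =>
      push_cast at ihD ⊢
      have hd := pathSum_succ_d hk M (k * (M + 1) + D + 1) (k * (M + 1) + D + 1) (by omega)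
      have he := pathSum_succ_e (k := k) M (k * (M + 1) + D) (k * (M + 1) + D) (by nlinarith)
      rw [add_sub_cancel_right] at hd
      rw [show k * (M + 1) + D - k = k * M + D by ring, ih hD] at he
      rw [show k * (M + 1) + D + 1 = k * M + (D + k + 1) by ring, ih (by omega),
        show k * M + (D + k + 1) = k * (M + 1) + D + 1 by ring] at hd
      rw [← add_assoc, hd, he, ihD]
      ring

lemma pathSum_diag_eq_zero {k : ℤ} (hk : 1 ≤ k) {M : ℕ} (hM : 1 ≤ M) {D : ℤ} (hD : 0 ≤ D) :
    pathSum k M (k * M + D) (k * M + D) = 0 := by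
  rw [pathSum_diag_eq (by omega) M hD, pathSum_mul_self_eq_zero hk hM]
  have : (1 : ℤ) ≤ M := by exact_mod_cast hM
  nlinarith

/-- The right-hand side of the theorem, with `M = m - a`, `d = n + r + 1 - k a`, `e = b + r - k a`,
summed over `i ≤ M` instead of `i ≤ e / (k + 1)`: the terms outside either range vanish. -/
def pathFormula (k r m n a b : ℤ) : ℤ :=
  pathSum k (m - a).toNat (n + r + 1 - k * a) (b + r - k * a)

lemma pathFormula_self_left (k r m n b : ℤ) : pathFormula k r m n m b = 1 := by
  simp [pathFormula, pathSum_zero]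

lemma pathFormula_succ {k r m n a b : ℤ} (ham : a < m) (hb : k * (a + 1) - r ≤ b) :
    pathFormula k r m n a b = pathFormula k r m n (a + 1) b + pathFormula k r m n a (b + 1) := by
  obtain ⟨M, hM⟩ : ∃ M : ℕ, (m - a).toNat = M + 1 := ⟨(m - a).toNat - 1, by omega⟩
  have hM' : (m - (a + 1)).toNat = M := by omega
  have := pathSum_succ_e (k := k) M (n + r + 1 - k * a) (b + r - k * a) (by linarith)
  rw [show b + r - k * a + 1 = b + 1 + r - k * a by ring,
    show n + r + 1 - k * a - k = n + r + 1 - k * (a + 1) by ring,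
    show b + r - k * a - k = b + r - k * (a + 1) by ring] at this
  rw [pathFormula, pathFormula, pathFormula, hM, hM', this]
  ring

lemma pathFormula_eq_succ_of_lt {k r m n a b : ℤ} (hk : 0 ≤ k) (hb : b < k * (a + 1) - r) :
    pathFormula k r m n a b = pathFormula k r m n a (b + 1) := by
  rw [pathFormula, pathFormula, pathSum_of_lt hk _ _ (by linarith),
    pathSum_of_lt hk _ _ (by linarith)]

lemma pathFormula_past_end_eq_zero {k r m n a : ℤ} (hk : 1 ≤ k) (ham : a < m) (hn : k * m - r ≤ n) :
    pathFormula k r m n a (n + 1) = 0 := by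
  have hM : (((m - a).toNat : ℕ) : ℤ) = m - a := by omega
  have := pathSum_diag_eq_zero hk (M := (m - a).toNat) (by omega) (D := n + r + 1 - k * m)
    (by omega)
  rw [hM, show k * (m - a) + (n + r + 1 - k * m) = n + r + 1 - k * a by ring] at this
  rw [pathFormula, show n + 1 + r - k * a = n + r + 1 - k * a by ring, this]

lemma monoPath_iff {s t : ℤ × ℤ} {P : List (ℤ × ℤ)} :
    MonoPath s t P ↔ P.head? = some s ∧ P.getLast? = some t ∧
      P.IsChain (fun p q => q = (p.1 + 1, p.2) ∨ q = (p.1, p.2 + 1)) :=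
  Iff.rfl

lemma not_monoPath_nil (s t : ℤ × ℤ) : ¬ MonoPath s t [] := by simp [monoPath_iff]

lemma monoPath_singleton {s t p : ℤ × ℤ} : MonoPath s t [p] ↔ p = s ∧ p = t := by
  simp [monoPath_iff]

lemma MonoPath.eq_of_cons {s t p : ℤ × ℤ} {L : List (ℤ × ℤ)} (h : MonoPath s t (p :: L)) :
    p = s := by
  simpa using h.1

lemma monoPath_cons_cons {s t p q : ℤ × ℤ} {L : List (ℤ × ℤ)} :
    MonoPath s t (p :: q :: L) ↔
      p = s ∧ (q = (s.1 + 1, s.2) ∨ q = (s.1, s.2 + 1)) ∧ MonoPath q t (q :: L) := by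
  simp only [monoPath_iff, List.isChain_cons_cons, List.head?_cons, Option.some.injEq,
    List.getLast?_cons_cons, true_and]
  constructor
  · rintro ⟨rfl, h, hq, hL⟩; exact ⟨rfl, hq, h, hL⟩
  · rintro ⟨rfl, hq, h, hL⟩; exact ⟨rfl, h, hq, hL⟩

lemma MonoPath.le {s t : ℤ × ℤ} {P : List (ℤ × ℤ)} (h : MonoPath s t P) :
    s.1 ≤ t.1 ∧ s.2 ≤ t.2 := by
  induction P generalizing s with
  | nil => exact absurd h (not_monoPath_nil s t)
  | cons p L ih =>
    cases L with
    | nil =>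
      obtain ⟨rfl, rfl⟩ := monoPath_singleton.1 h
      exact ⟨le_rfl, le_rfl⟩
    | cons q L =>
      obtain ⟨-, hq, hL⟩ := monoPath_cons_cons.1 h
      have := ih hL
      rcases hq with rfl | rfl <;> simp only at this ⊢ <;> omega

def abovePaths (k r : ℤ) (s t : ℤ × ℤ) : Set (List (ℤ × ℤ)) :=
  {P | MonoPath s t P ∧ ∀ p ∈ P, k * p.1 - r ≤ p.2}

lemma cons_mem_abovePaths {k r : ℤ} {s t q : ℤ × ℤ} {L : List (ℤ × ℤ)} :
    s :: q :: L ∈ abovePaths k r s t ↔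
      k * s.1 - r ≤ s.2 ∧ (q = (s.1 + 1, s.2) ∨ q = (s.1, s.2 + 1)) ∧
        q :: L ∈ abovePaths k r q t := by
  simp only [abovePaths, Set.mem_ofPred_eq, monoPath_cons_cons, List.forall_mem_cons, true_and]
  tauto

lemma abovePaths_eq_empty {k r a b m n : ℤ} (h : m < a ∨ n < b ∨ b < k * a - r) :
    abovePaths k r (a, b) (m, n) = ∅ := by
  refine Set.eq_empty_of_forall_notMem fun P ⟨hP, hline⟩ => ?_
  obtain ⟨L, rfl⟩ := List.head?_eq_some_iff.1 hP.1
  have := hline _ List.mem_cons_self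
  have := hP.le
  simp only at *
  omega

lemma abovePaths_self_subset (k r : ℤ) (t : ℤ × ℤ) : abovePaths k r t t ⊆ {[t]} := by
  rintro (_ | ⟨p, _ | ⟨q, L⟩⟩) ⟨hP, -⟩
  · exact absurd hP (not_monoPath_nil t t)
  · rw [(monoPath_singleton.1 hP).1]; rfl
  · obtain ⟨-, hq, hL⟩ := monoPath_cons_cons.1 hP
    have := hL.le
    rcases hq with rfl | rfl <;> simp only at this <;> omega

lemma abovePaths_self {k r : ℤ} {t : ℤ × ℤ} (ht : k * t.1 - r ≤ t.2) :
    abovePaths k r t t = {[t]} := by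
  refine (abovePaths_self_subset k r t).antisymm ?_
  rintro _ rfl
  exact ⟨monoPath_singleton.2 ⟨rfl, rfl⟩, by simpa using ht⟩

lemma abovePaths_subset_image {k r : ℤ} {s t : ℤ × ℤ} (hst : s ≠ t) :
    abovePaths k r s t ⊆
      List.cons s '' (abovePaths k r (s.1 + 1, s.2) t ∪ abovePaths k r (s.1, s.2 + 1) t) := by
  rintro (_ | ⟨p, _ | ⟨q, L⟩⟩) ⟨hP, hline⟩
  · exact absurd hP (not_monoPath_nil s t)
  · obtain ⟨rfl, rfl⟩ := monoPath_singleton.1 hP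
    exact absurd rfl hst
  · obtain rfl := hP.eq_of_cons
    obtain ⟨-, hq, hL⟩ := cons_mem_abovePaths.1 ⟨hP, hline⟩
    refine ⟨q :: L, ?_, rfl⟩
    rcases hq with rfl | rfl
    exacts [Or.inl hL, Or.inr hL]

lemma image_subset_abovePaths {k r : ℤ} {s t : ℤ × ℤ} (hs : k * s.1 - r ≤ s.2) :
    List.cons s '' (abovePaths k r (s.1 + 1, s.2) t ∪ abovePaths k r (s.1, s.2 + 1) t) ⊆
      abovePaths k r s t := by
  rintro _ ⟨_ | ⟨q, L⟩, hL, rfl⟩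
  · rcases hL with ⟨hL, -⟩ | ⟨hL, -⟩ <;> exact absurd hL (not_monoPath_nil _ t)
  · refine cons_mem_abovePaths.2 ⟨hs, ?_⟩
    rcases hL with hL | hL <;> obtain rfl := hL.1.eq_of_cons
    exacts [⟨Or.inl rfl, hL⟩, ⟨Or.inr rfl, hL⟩]

lemma abovePaths_finite (k r : ℤ) (s t : ℤ × ℤ) : (abovePaths k r s t).Finite := by
  obtain ⟨N, hN⟩ : ∃ N : ℕ, t.1 + t.2 - s.1 - s.2 < N :=
    ⟨(t.1 + t.2 - s.1 - s.2 + 1).toNat, by omega⟩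
  induction N generalizing s with
  | zero =>
    refine Set.Finite.subset Set.finite_empty fun P hP => ?_
    have := hP.1.le
    omega
  | succ N ih =>
    by_cases hst : s = t
    · subst hst
      exact (Set.finite_singleton _).subset (abovePaths_self_subset k r s)
    · refine Set.Finite.subset (Set.Finite.image _ (.union ?_ ?_)) (abovePaths_subset_image hst)
      · exact ih _ (by simp only; omega)
      · exact ih _ (by simp only; omega)

lemma ncard_abovePaths {k r : ℤ} {s t : ℤ × ℤ} (hs : k * s.1 - r ≤ s.2) (hst : s ≠ t) :
    (abovePaths k r s t).ncard =
      (abovePaths k r (s.1 + 1, s.2) t).ncard + (abovePaths k r (s.1, s.2 + 1) t).ncard := by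
  rw [(abovePaths_subset_image hst).antisymm (image_subset_abovePaths hs),
    Set.ncard_image_of_injective _ List.cons_injective]
  refine Set.ncard_union_eq ?_ (abovePaths_finite _ _ _ _) (abovePaths_finite _ _ _ _)
  refine Set.disjoint_left.2 fun P h₁ h₂ => ?_
  have := h₁.1.1.symm.trans h₂.1.1
  simp at this

theorem ncard_abovePaths_eq_pathFormula {k r m n : ℤ} (hk : 1 ≤ k) (hn : k * m - r ≤ n)
    {a b : ℤ} (ham : a ≤ m) (hbn : b ≤ n) (hab : k * a - r ≤ b) :
    ((abovePaths k r (a, b) (m, n)).ncard : ℤ) = pathFormula k r m n a b := by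
  obtain ⟨N, hN⟩ : ∃ N : ℕ, m - a + (n - b) = N := ⟨(m - a + (n - b)).toNat, by omega⟩
  induction N generalizing a b with
  | zero =>
    obtain ⟨rfl, rfl⟩ : a = m ∧ b = n := by omega
    rw [abovePaths_self hn, Set.ncard_singleton, pathFormula_self_left, Nat.cast_one]
  | succ N ih =>
    rw [ncard_abovePaths hab (by simp only [ne_eq, Prod.mk.injEq]; omega)]
    push_cast
    rcases ham.eq_or_lt with rfl | ham
    · rw [abovePaths_eq_empty (by omega), ih le_rfl (by omega) (by omega) (by omega),
        pathFormula_self_left, pathFormula_self_left, Set.ncard_empty, Nat.cast_zero, zero_add]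
    rcases lt_or_ge b (k * (a + 1) - r) with hb | hb
    · have : k * (a + 1) ≤ k * m := by nlinarith
      rw [abovePaths_eq_empty (by omega), ih ham.le (by omega) (by omega) (by omega),
        pathFormula_eq_succ_of_lt (by omega) hb, Set.ncard_empty, Nat.cast_zero, zero_add]
    rw [ih ham (by omega) hb (by omega), pathFormula_succ ham hb]
    rcases hbn.eq_or_lt with rfl | hbn
    · rw [abovePaths_eq_empty (by omega), pathFormula_past_end_eq_zero hk ham hn, Set.ncard_empty,
        Nat.cast_zero]
    · rw [ih ham.le hbn (by omega) (by omega)]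

lemma sum_range_eq_of_eq_zero {β : Type*} [AddCommMonoid β] {f : ℕ → β} {N₁ N₂ : ℕ}
    (h : ∀ i, min N₁ N₂ ≤ i → f i = 0) : ∑ i ∈ range N₁, f i = ∑ i ∈ range N₂, f i := by
  have key : ∀ N, min N₁ N₂ ≤ N → ∑ i ∈ range N, f i = ∑ i ∈ range (min N₁ N₂), f i :=
    fun N hN => (sum_subset (range_subset_range.2 hN) fun i _ hi =>
      h i (by simpa only [mem_range, not_lt] using hi)).symm
  rw [key N₁ (min_le_left _ _), key N₂ (min_le_right _ _)]

lemma cast_ballot_mul_IC {k d e : ℤ} (M : ℤ) {i : ℕ} (hed : e < d) (hi : 0 ≤ e ∨ i ≠ 0) :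
    (ballot k d M * IC e i : ℚ) = ((d - k * M : ℤ) : ℚ) / d * IC (d + M - 1) M * IC e i := by
  by_cases hd : 1 ≤ d
  · rw [cast_ballot_eq_div M hd]
  · rw [IC_eq_zero_of_lt (by omega) (by omega)]
    simp

theorem stmt6_general (k r a b m n : ℤ) (hk : 1 ≤ k) (ham : a ≤ m)
    (hn : k * m - r ≤ n) (hb2 : k * a - r ≤ b) (hbn : b ≤ n) :
    (NW k r a b m n : ℚ) =
      ∑ i ∈ Finset.range (((b + r - k * a) / (k + 1)).toNat + 1),
        (-1 : ℚ) ^ i * (((n + r + 1 - k * m : ℤ) : ℚ) / ((n + r + 1 - k * (a + (i : ℤ)) : ℤ) : ℚ)) *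
          (IC (m + n + r - (k + 1) * (a + (i : ℤ))) (m - a - (i : ℤ)) : ℚ) *
          (IC (b + r - k * (a + (i : ℤ))) (i : ℤ) : ℚ) := by
  have hcount : (NW k r a b m n : ℤ) = pathFormula k r m n a b :=
    ncard_abovePaths_eq_pathFormula hk hn ham hbn hb2
  rw [show (NW k r a b m n : ℚ) = pathFormula k r m n a b by exact_mod_cast hcount, pathFormula,
    pathSum, Int.cast_sum]
  refine (sum_congr rfl fun i hi => ?_).trans (sum_range_eq_of_eq_zero fun i hi => ?_)
  · have hi : (i : ℤ) ≤ m - a := by have := mem_range.1 hi; omega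
    rw [show ((m - a).toNat : ℤ) - i = m - a - i by omega,
      show n + r + 1 - k * a - k * i = n + r + 1 - k * (a + i) by ring,
      show b + r - k * a - k * i = b + r - k * (a + i) by ring,
      show m + n + r - (k + 1) * (a + i) = n + r + 1 - k * (a + i) + (m - a - i) - 1 by ring,
      show n + r + 1 - k * m = n + r + 1 - k * (a + i) - k * (m - a - i) by ring]
    simp only [Int.cast_mul, Int.cast_pow, Int.cast_neg, Int.cast_one, Int.cast_natCast]
    have hi0 : 0 ≤ b + r - k * (a + i) ∨ i ≠ 0 := by
      rcases Nat.eq_zero_or_pos i with rfl | hi0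
      · left; simpa using hb2
      · right; omega
    rw [mul_assoc, cast_ballot_mul_IC _ (by linarith) hi0]
    ring
  · rcases min_le_iff.1 hi with hi | hi
    · rw [IC_of_neg (by omega)]
      simp
    · have hq : (b + r - k * a) / (k + 1) + 1 ≤ i := by omega
      have := Int.lt_mul_ediv_self_add (x := b + r - k * a) (by omega : 0 < k + 1)
      rw [IC_eq_zero_of_lt (x := b + r - k * (a + i)) (j := i) (by nlinarith) (by omega)]
      simp

theorem stmt6 (k r a b m n : ℤ) (hk : 1 ≤ k) (ha : 0 ≤ a) (ham : a ≤ m)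
    (hn : k * m - r ≤ n) (hb1 : 0 ≤ b) (hb2 : k * a - r ≤ b) (hbn : b ≤ n) :
    (NW k r a b m n : ℚ) =
      ∑ i ∈ Finset.range (((b + r - k * a) / (k + 1)).toNat + 1),
        (-1 : ℚ) ^ i * (((n + r + 1 - k * m : ℤ) : ℚ) / ((n + r + 1 - k * (a + (i : ℤ)) : ℤ) : ℚ)) *
          (IC (m + n + r - (k + 1) * (a + (i : ℤ))) (m - a - (i : ℤ)) : ℚ) *
          (IC (b + r - k * (a + (i : ℤ))) (i : ℤ) : ℚ) :=
  stmt6_general k r a b m n hk ham hn hb2 hbn
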